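/- arXiv:2209.13099 — 6 statements merged into one kernel-verified Lean document; each statement's English description precedes it below -/
import Mathlib

section
/- Let n ≥ 2, m > 0 and define a_i(b) = e^{m b_i}/Σ_j e^{m b_j} and p_i(b) = b_i - (Σ_j e^{m b_j})/(m e^{m b_i}) · ln( (Σ_j e^{m b_j}) / (1 + Σ_{j≠i} e^{m b_j}) ). Then a_i(b_i, b_{-i}) · p_i(b_i, b_{-i}) = ∫_0^{b_i} t · (∂/∂t) a_i(t, b_{-i}) dt, i.e. the payment rule is the Myerson payment associated with the soft-max allocation. -/
open Finset

/-- Soft-max (logit) allocation rule with parameter `m`. -/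
noncomputable def softAlloc (n : ℕ) (m : ℝ) (b : Fin n → ℝ) (i : Fin n) : ℝ :=
  Real.exp (m * b i) / ∑ j, Real.exp (m * b j)

/-- Soft second-price payment rule with parameter `m`. -/
noncomputable def softPay (n : ℕ) (m : ℝ) (b : Fin n → ℝ) (i : Fin n) : ℝ :=
  b i - (∑ j, Real.exp (m * b j)) / (m * Real.exp (m * b i)) *
    Real.log ((∑ j, Real.exp (m * b j)) /
      (1 + ∑ j ∈ Finset.univ.erase i, Real.exp (m * b j)))

/-! With the other bids fixed, bidder `i`'s allocation is the logistic share
`t ↦ e^{mt} / (e^{mt} + S)`, `S = Σ_{j ≠ i} e^{m b_j}`. Integrating `t · a'(t)` by parts gives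
`B a(B) - ∫₀^B a`, and `log (e^{mt} + S) / m` is an antiderivative of `a`; the result is
`B a(B) - (log (e^{mB} + S) - log (1 + S)) / m`, which is `a_i p_i`. -/

theorem Finset.sum_comp_update_eq_add_sum_erase {ι α β : Type*} [Fintype ι] [DecidableEq ι]
    [AddCommMonoid β] (f : α → β) (b : ι → α) (i : ι) (s : α) :
    ∑ j, f (Function.update b i s j) = f s + ∑ j ∈ univ.erase i, f (b j) := by
  rw [← add_sum_erase _ _ (mem_univ i), Function.update_self]
  congr 1
  exact sum_congr rfl fun j hj => by rw [Function.update_of_ne (ne_of_mem_erase hj)]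

theorem intervalIntegral.integral_id_mul_deriv {g : ℝ → ℝ} (hg : ContDiff ℝ 1 g) (a b : ℝ) :
    ∫ t in a..b, t * deriv g t = b * g b - a * g a - ∫ t in a..b, g t := by
  simpa using integral_mul_deriv_eq_deriv_mul (fun x _ => hasDerivAt_id x)
    (fun x _ => (hg.differentiable one_ne_zero x).hasDerivAt)
    intervalIntegrable_const ((hg.continuous_deriv le_rfl).intervalIntegrable a b)

namespace Real

noncomputable def logisticShare (m S s : ℝ) : ℝ :=
  exp (m * s) / (exp (m * s) + S)

variable {m S : ℝ}

theorem exp_mul_add_pos (hS : 0 ≤ S) (t : ℝ) : 0 < exp (m * t) + S := by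
  positivity

theorem contDiff_logisticShare (hS : 0 ≤ S) {k : WithTop ℕ∞} :
    ContDiff ℝ k (logisticShare m S) :=
  ContDiff.div (by fun_prop) (by fun_prop) fun t => (exp_mul_add_pos hS t).ne'

theorem hasDerivAt_log_exp_mul_add_div (hm : m ≠ 0) (hS : 0 ≤ S) (t : ℝ) :
    HasDerivAt (fun t => log (exp (m * t) + S) / m) (logisticShare m S t) t := by
  have hexp : HasDerivAt (fun t => exp (m * t) + S) (exp (m * t) * m) t := by
    simpa using (((hasDerivAt_id t).const_mul m).exp).add_const S
  refine (hexp.log (exp_mul_add_pos hS t).ne').div_const m |>.congr_deriv ?_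
  rw [logisticShare, mul_div_right_comm, mul_div_cancel_right₀ _ hm]

theorem integral_logisticShare (hm : m ≠ 0) (hS : 0 ≤ S) (B : ℝ) :
    ∫ t in (0 : ℝ)..B, logisticShare m S t = (log (exp (m * B) + S) - log (1 + S)) / m := by
  rw [intervalIntegral.integral_eq_sub_of_hasDerivAt
    (fun t _ => hasDerivAt_log_exp_mul_add_div hm hS t)
    ((contDiff_logisticShare (k := 0) hS).continuous.intervalIntegrable _ _)]
  simp [sub_div]

end Real

theorem softAlloc_update {n : ℕ} (m : ℝ) (b : Fin n → ℝ) (i : Fin n) (s : ℝ) :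
    softAlloc n m (Function.update b i s) i =
      Real.logisticShare m (∑ j ∈ univ.erase i, Real.exp (m * b j)) s := by
  rw [softAlloc, sum_comp_update_eq_add_sum_erase (fun x => Real.exp (m * x)),
    Function.update_self, Real.logisticShare]

theorem stmt1_general (n : ℕ) (m : ℝ) (hm : 0 < m)
    (b : Fin n → ℝ) (i : Fin n) :
    softAlloc n m b i * softPay n m b i =
      ∫ t in (0:ℝ)..(b i),
        t * deriv (fun s : ℝ => softAlloc n m (Function.update b i s) i) t := by
  set S := ∑ j ∈ univ.erase i, Real.exp (m * b j)
  have hS : 0 ≤ S := by positivity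
  have hsum : ∑ j, Real.exp (m * b j) = Real.exp (m * b i) + S :=
    (add_sum_erase _ _ (mem_univ i)).symm
  simp only [softAlloc_update]
  rw [intervalIntegral.integral_id_mul_deriv (Real.contDiff_logisticShare hS),
    Real.integral_logisticShare hm.ne' hS, softAlloc, softPay, hsum, Real.logisticShare,
    Real.log_div (Real.exp_mul_add_pos hS _).ne' (by positivity)]
  field_simp
  ring

theorem stmt1 (n : ℕ) (hn : 2 ≤ n) (m : ℝ) (hm : 0 < m)
    (b : Fin n → ℝ) (hb : ∀ j, b j ∈ Set.Icc (0:ℝ) 1) (i : Fin n) :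
    softAlloc n m b i * softPay n m b i =
      ∫ t in (0:ℝ)..(b i),
        t * deriv (fun s : ℝ => softAlloc n m (Function.update b i s) i) t :=
  stmt1_general n m hm b i
end

section
/- For the soft second-price payment rule p_i(b_i,b_{-i}) = b_i - (Σ_j e^{m b_j})/(m e^{m b_i}) · ln( (Σ_j e^{m b_j}) / (1 + Σ_{j≠i} e^{m b_j}) ) with distinct bids satisfying b_i = max_j b_j > b_{(2)} (the second largest bid), the limit as m → ∞ of p_i(b_i, b_{-i}) equals b_{(2)}. -/
open Finset Filter

/-
Write `S = ∑ⱼ e^{m bⱼ}` and `T = ∑_{j ≠ i} e^{m bⱼ}`. Then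
`p_i = b_i - (S / e^{m b_i}) · (log S / m - log (1 + T) / m)`.
The factor `S / e^{m b_i} = 1 + ∑_{j ≠ i} e^{m (bⱼ - b_i)}` tends to `1`, and a log-sum-exp
divided by `m` tends to the largest exponent, so `log S / m → b_i` and
`log (1 + T) / m → b_{(2)}`; the constant `1` is harmless there because `b_{(2)} ≥ 0`.
-/

open Real

theorem tendsto_log_add_sum_exp_mul_div_atTop {ι : Type*} {s : Finset ι} {f : ι → ℝ}
    {a M : ℝ}
    (ha : 0 ≤ a) (hM : 0 ≤ M) (hattain : ∃ j ∈ s, f j = M) (hle : ∀ j ∈ s, f j ≤ M) :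
    Tendsto (fun m : ℝ => log (a + ∑ j ∈ s, exp (m * f j)) / m) atTop (nhds M) := by
  obtain ⟨j₀, hj₀, hj₀M⟩ := hattain
  have hpos : ∀ m, 0 < a + ∑ j ∈ s, exp (m * f j) := fun m =>
    add_pos_of_nonneg_of_pos ha (sum_pos (fun j _ => exp_pos _) ⟨j₀, hj₀⟩)
  have lower : ∀ᶠ m : ℝ in atTop, M ≤ log (a + ∑ j ∈ s, exp (m * f j)) / m := by
    filter_upwards [eventually_gt_atTop 0] with m hm
    rw [le_div_iff₀ hm, mul_comm, le_log_iff_exp_le (hpos m), ← hj₀M]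
    exact le_add_of_nonneg_of_le ha
      (single_le_sum (f := fun j => exp (m * f j)) (fun j _ => (exp_pos _).le) hj₀)
  have upper : ∀ᶠ m : ℝ in atTop,
      log (a + ∑ j ∈ s, exp (m * f j)) / m ≤ log (a + #s) / m + M := by
    filter_upwards [eventually_gt_atTop 0] with m hm
    have hsum : ∑ j ∈ s, exp (m * f j) ≤ #s * exp (m * M) := by
      simpa using sum_le_card_nsmul s (fun j => exp (m * f j)) (exp (m * M))
        fun j hj => exp_le_exp.mpr (mul_le_mul_of_nonneg_left (hle j hj) hm.le)
    have hone : 1 ≤ exp (m * M) := one_le_exp (mul_nonneg hm.le hM)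
    have hcard : 0 < a + #s := add_pos_of_nonneg_of_pos ha (by simpa using ⟨j₀, hj₀⟩)
    have hbound : a + ∑ j ∈ s, exp (m * f j) ≤ (a + #s) * exp (m * M) := by nlinarith
    rw [div_add' _ _ _ hm.ne', div_le_div_iff_of_pos_right hm]
    calc log (a + ∑ j ∈ s, exp (m * f j)) ≤ log ((a + #s) * exp (m * M)) :=
          log_le_log (hpos m) hbound
      _ = log (a + #s) + M * m := by
          rw [log_mul hcard.ne' (exp_ne_zero _), log_exp, mul_comm]
  have hconst : Tendsto (fun m : ℝ => log (a + #s) / m + M) atTop (nhds M) := by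
    simpa using (tendsto_const_nhds.div_atTop tendsto_id).add_const M
  exact tendsto_of_tendsto_of_tendsto_of_le_of_le' tendsto_const_nhds hconst lower upper

theorem tendsto_sum_exp_mul_atTop_nhds_zero {ι : Type*} {s : Finset ι} {f : ι → ℝ}
    (hneg : ∀ j ∈ s, f j < 0) :
    Tendsto (fun m : ℝ => ∑ j ∈ s, exp (m * f j)) atTop (nhds 0) := by
  simpa using tendsto_finsetSum s fun j hj =>
    tendsto_exp_atBot.comp (tendsto_id.atTop_mul_const_of_neg (hneg j hj))

theorem tendsto_sum_exp_mul_div_exp_mul_atTop {ι : Type*} [Fintype ι] [DecidableEq ι]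
    {b : ι → ℝ} {i : ι} (hmax : ∀ j, j ≠ i → b j < b i) :
    Tendsto (fun m : ℝ => (∑ j, exp (m * b j)) / exp (m * b i)) atTop (nhds 1) := by
  have hrest := (tendsto_sum_exp_mul_atTop_nhds_zero (s := univ.erase i) (f := fun j => b j - b i)
    fun j hj => sub_neg.mpr (hmax j (ne_of_mem_erase hj))).const_add 1
  rw [add_zero] at hrest
  refine hrest.congr fun m => ?_
  rw [← add_sum_erase _ _ (mem_univ i), add_div, div_self (exp_ne_zero _), sum_div]
  congr 1
  refine sum_congr rfl fun j _ => ?_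
  rw [← exp_sub, mul_sub]

theorem softPay_eq (n : ℕ) (m : ℝ) (b : Fin n → ℝ) (i : Fin n) :
    softPay n m b i = b i - (∑ j, exp (m * b j)) / exp (m * b i) *
      (log (∑ j, exp (m * b j)) / m - log (1 + ∑ j ∈ univ.erase i, exp (m * b j)) / m) := by
  have hS : 0 < ∑ j, exp (m * b j) := sum_pos (fun j _ => exp_pos _) ⟨i, mem_univ i⟩
  have hT : 0 < 1 + ∑ j ∈ univ.erase i, exp (m * b j) := by positivity
  rw [softPay, log_div hS.ne' hT.ne']
  ring

theorem stmt2_general (n : ℕ) (b : Fin n → ℝ)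
    (hb : ∀ j, b j ∈ Set.Ioo (0:ℝ) 1)
    (i : Fin n) (hmax : ∀ j, j ≠ i → b j < b i)
    (b2 : ℝ) (hb2 : ∃ j₀, j₀ ≠ i ∧ b j₀ = b2) (hb2max : ∀ j, j ≠ i → b j ≤ b2) :
    Tendsto (fun m : ℝ => softPay n m b i) atTop (nhds b2) := by
  obtain ⟨j₀, hj₀i, hj₀⟩ := hb2
  have hratio := tendsto_sum_exp_mul_div_exp_mul_atTop hmax
  have hall : Tendsto (fun m : ℝ => log (∑ j, exp (m * b j)) / m) atTop (nhds (b i)) := by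
    simpa using tendsto_log_add_sum_exp_mul_div_atTop le_rfl (hb i).1.le ⟨i, mem_univ i, rfl⟩
      fun j _ => (eq_or_ne j i).elim (fun h => h ▸ le_rfl) fun h => (hmax j h).le
  have hothers := tendsto_log_add_sum_exp_mul_div_atTop zero_le_one (hj₀ ▸ (hb j₀).1.le)
    ⟨j₀, mem_erase.2 ⟨hj₀i, mem_univ _⟩, hj₀⟩ fun j hj => hb2max j (ne_of_mem_erase hj)
  have hlim := tendsto_const_nhds (x := b i) |>.sub (hratio.mul (hall.sub hothers))
  rw [one_mul, sub_sub_cancel] at hlim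
  simpa only [softPay_eq] using hlim

theorem stmt2 (n : ℕ) (hn : 2 ≤ n) (b : Fin n → ℝ)
    (hdist : Function.Injective b) (hb : ∀ j, b j ∈ Set.Ioo (0:ℝ) 1)
    (i : Fin n) (hmax : ∀ j, j ≠ i → b j < b i)
    (b2 : ℝ) (hb2 : ∃ j₀, j₀ ≠ i ∧ b j₀ = b2) (hb2max : ∀ j, j ≠ i → b j ≤ b2) :
    Tendsto (fun m : ℝ => softPay n m b i) atTop (nhds b2) :=
  stmt2_general n b hb i hmax b2 hb2 hb2max
end

section
/- For the soft second-price payment rule p_i(b_i,b_{-i}) = b_i - (Σ_j e^{m b_j})/(m e^{m b_i}) · ln( (Σ_j e^{m b_j}) / (1 + Σ_{j≠i} e^{m b_j}) ) with distinct bids where 0 < b_i < max_j b_j, the limit as m → ∞ of p_i(b_i, b_{-i}) equals b_i. -/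
open Finset Filter

/-!
Write `E = exp (m bᵢ)` and `T = ∑_{j ≠ i} exp (m bⱼ)`, so that `bᵢ - pᵢ = (E + T)/(m E) · log ((E + T)/(1 + T))`.
Since `bᵢ ≥ 0` we have `E ≥ 1`, so the logarithm is nonnegative, and `log x ≤ x - 1` bounds it by `E/(1 + T)`.
A higher bid `bₖ > bᵢ` gives `E ≤ T`, hence `bᵢ - pᵢ ≤ (E + T)/(m (1 + T)) ≤ 2/m`.
-/

open Real

noncomputable def softDiscount (m E T : ℝ) : ℝ :=
  (E + T) / (m * E) * log ((E + T) / (1 + T))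

theorem softPay_eq_sub_softDiscount (n : ℕ) (m : ℝ) (b : Fin n → ℝ) (i : Fin n) :
    softPay n m b i =
      b i - softDiscount m (exp (m * b i)) (∑ j ∈ univ.erase i, exp (m * b j)) := by
  rw [softPay, softDiscount, ← add_sum_erase univ (fun j => exp (m * b j)) (mem_univ i)]

section softDiscount

variable {m E T : ℝ}

theorem softDiscount_nonneg (hm : 0 ≤ m) (hE : 1 ≤ E) (hT : 0 ≤ T) :
    0 ≤ softDiscount m E T := by
  have hR : 0 < 1 + T := by linarith
  refine mul_nonneg (by positivity) (log_nonneg ?_)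
  rw [one_le_div hR]
  linarith

theorem softDiscount_le_two_div (hm : 0 < m) (hE : 1 ≤ E) (hET : E ≤ T) :
    softDiscount m E T ≤ 2 / m := by
  have hEpos : 0 < E := by linarith
  have hS : 0 < E + T := by linarith
  have hR : 0 < 1 + T := by linarith
  have hlog : log ((E + T) / (1 + T)) ≤ E / (1 + T) := by
    refine (log_le_sub_one_of_pos (by positivity)).trans ?_
    rw [div_sub_one hR.ne']
    gcongr
    linarith
  calc softDiscount m E T
      ≤ (E + T) / (m * E) * (E / (1 + T)) := by
        unfold softDiscount
        gcongr
    _ = (E + T) / (1 + T) / m := by field_simp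
    _ ≤ 2 / m := by
        gcongr
        rw [div_le_iff₀ hR]
        linarith

end softDiscount

theorem stmt3_general (n : ℕ) (b : Fin n → ℝ)
    (hb : ∀ j, b j ∈ Set.Ioo (0:ℝ) 1)
    (i : Fin n) (hnotmax : ∃ j, b i < b j) :
    Tendsto (fun m : ℝ => softPay n m b i) atTop (nhds (b i)) := by
  obtain ⟨k, hik⟩ := hnotmax
  have hki : k ≠ i := by rintro rfl; exact lt_irrefl _ hik
  have hE : ∀ m, 0 ≤ m → 1 ≤ exp (m * b i) := fun m hm =>
    one_le_exp (mul_nonneg hm (hb i).1.le)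
  have hET : ∀ m, 0 ≤ m → exp (m * b i) ≤ ∑ j ∈ univ.erase i, exp (m * b j) := fun m hm =>
    (exp_le_exp.2 (mul_le_mul_of_nonneg_left hik.le hm)).trans
      (single_le_sum (f := fun j => exp (m * b j)) (fun _ _ => (exp_pos _).le)
        (mem_erase.2 ⟨hki, mem_univ k⟩))
  have hdiscount : Tendsto (fun m => softDiscount m (exp (m * b i))
      (∑ j ∈ univ.erase i, exp (m * b j))) atTop (nhds 0) := by
    refine tendsto_of_tendsto_of_tendsto_of_le_of_le' tendsto_const_nhds
      ((tendsto_const_nhds (x := (2 : ℝ))).div_atTop tendsto_id) ?_ ?_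
    · filter_upwards [eventually_ge_atTop 0] with m hm
      exact softDiscount_nonneg hm (hE m hm) ((zero_le_one.trans (hE m hm)).trans (hET m hm))
    · filter_upwards [eventually_gt_atTop 0] with m hm
      exact softDiscount_le_two_div hm (hE m hm.le) (hET m hm.le)
  simpa [softPay_eq_sub_softDiscount] using tendsto_const_nhds.sub hdiscount

theorem stmt3 (n : ℕ) (hn : 2 ≤ n) (b : Fin n → ℝ)
    (hdist : Function.Injective b) (hb : ∀ j, b j ∈ Set.Ioo (0:ℝ) 1)
    (i : Fin n) (hnotmax : ∃ j, b i < b j) :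
    Tendsto (fun m : ℝ => softPay n m b i) atTop (nhds (b i)) :=
  stmt3_general n b hb i hnotmax
end

section
/- Define θ_1(b_1,b_2) = (1/2)max(b_1,b_2) - min(b_1,b_2) if b_1 > b_2, and 0 if b_1 < b_2 (define θ_1(b,b) arbitrarily, say -b/4), with θ_2 symmetric. Then there is no function r̃ : [0,1]² → ℝ with r̃(0,0) = 0 satisfying θ_i(b_i, b_{-i}) = r̃(b_i, b_{-i}) - r̃(0, b_{-i}) for all b and i ∈ {1,2}: indeed, computing r̃(1,1) along the path (0,0)→(1,0)→(1,1) gives 1/4, while along (0,0)→(0.5,0)→(0.5,1)→ adjusting via θ_1(1,1)−θ_1(0.5,1) gives 0, a contradiction. -/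
/-- Payment difference function for the modified first-price auction (n = 2). -/
noncomputable def theta1 (x y : ℝ) : ℝ :=
  if x > y then max x y / 2 - min x y else if x < y then 0 else -x / 4

theorem stmt12 :
    ¬ ∃ r : ℝ → ℝ → ℝ, r 0 0 = 0 ∧
      (∀ b1 ∈ Set.Icc (0:ℝ) 1, ∀ b2 ∈ Set.Icc (0:ℝ) 1,
        theta1 b1 b2 = r b1 b2 - r 0 b2 ∧
        theta1 b2 b1 = r b1 b2 - r b1 0) := by
  rintro ⟨r, h0, h⟩
  have h10 := h 1 (by norm_num) 0 (by norm_num)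
  have h11 := h 1 (by norm_num) 1 (by norm_num)
  have hh0 := h (1/2) (by norm_num) 0 (by norm_num)
  have hh1 := h (1/2) (by norm_num) 1 (by norm_num)
  simp only [theta1] at h10 h11 hh0 hh1
  norm_num at h10 h11 hh0 hh1
  linarith [h10, h11.1, h11.2, hh0, hh1.1, hh1.2]
end

section
/- Let n > t ≥ 1 and suppose each of X_0 + w, X_1 + w, ..., X_{t-1} + w is a sum of n, n−1, ..., n−t+1 terms respectively, each term at least 1, and 1 ≤ w ≤ e^m. Then w · Σ_{s=0}^{t-1} 1/(X_s + w) ≤ e^m · ln( n/(n−t) ). Consequently, if e^m ln(n/(n−t)) < 1, the function w ↦ w/∏_{s=0}^{t-1}(X_s+w) is increasing at w. -/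
/-!
Each term satisfies `1 / (X_s + w) ≤ 1 / (n - s) ≤ log (n - s) - log (n - s - 1)`, so the sum
telescopes to at most `log (n / (n - t))`, and `w ≤ e^m` gives the first bound. For the
monotonicity, the logarithmic derivative of `P(v) = ∏ (X_s + v)` is `∑ 1 / (X_s + v)`, hence
`d/dv (v / P(v)) = (1 - w ∑ 1 / (X_s + w)) / P(w)`, which is positive once `e^m log (n / (n - t)) < 1`.
-/

open Finset Real

lemma one_div_le_log_sub_log_sub_one {x : ℝ} (hx : 1 < x) :
    1 / x ≤ log x - log (x - 1) := by
  have hx0 : 0 < x - 1 := by linarith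
  have h := one_sub_inv_le_log_of_pos (div_pos (hx0.trans (by linarith)) hx0)
  rw [log_div (by linarith) hx0.ne', inv_div] at h
  calc 1 / x = 1 - (x - 1) / x := by field_simp; ring
    _ ≤ _ := h

lemma sum_one_div_le_log_div {n t : ℕ} (hnt : t < n) {a : Fin t → ℝ}
    (ha : ∀ s, (n : ℝ) - s ≤ a s) :
    ∑ s, 1 / a s ≤ log ((n : ℝ) / (n - t)) := by
  have hnt' : (t : ℝ) < n := by exact_mod_cast hnt
  have hterm (s : Fin t) : 1 / a s ≤ log ((n : ℝ) - s) - log ((n : ℝ) - (s + 1)) := by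
    have hs : (s : ℝ) + 1 ≤ t := by exact_mod_cast s.2
    calc 1 / a s ≤ 1 / ((n : ℝ) - s) := one_div_le_one_div_of_le (by linarith) (ha s)
      _ ≤ _ := by
        simpa only [sub_sub] using one_div_le_log_sub_log_sub_one (x := (n : ℝ) - s) (by linarith)
  have htelescope := sum_range_sub' (fun i : ℕ => log ((n : ℝ) - i)) t
  push_cast at htelescope
  calc ∑ s, 1 / a s
      ≤ ∑ s : Fin t, (log ((n : ℝ) - s) - log ((n : ℝ) - (s + 1))) := sum_le_sum fun s _ => hterm s
    _ = ∑ i ∈ range t, (log ((n : ℝ) - i) - log ((n : ℝ) - (i + 1))) :=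
      (sum_range fun i : ℕ => log ((n : ℝ) - i) - log ((n : ℝ) - (i + 1))).symm
    _ = log ((n : ℝ) / (n - t)) := by
      rw [htelescope, log_div (by linarith) (by linarith), sub_zero]

lemma hasDerivAt_prod_add {ι : Type*} [Fintype ι] (X : ι → ℝ) {w : ℝ}
    (hX : ∀ s, X s + w ≠ 0) :
    HasDerivAt (fun v => ∏ s, (X s + v)) ((∏ s, (X s + w)) * ∑ s, 1 / (X s + w)) w := by
  classical
  have h := HasDerivAt.fun_finsetProd (u := univ) (f := fun s v => X s + v) (f' := fun _ => 1)
    (x := w) fun s _ => (hasDerivAt_id w).const_add (X s)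
  refine h.congr_deriv ?_
  rw [mul_sum]
  refine sum_congr rfl fun s _ => ?_
  rw [← prod_erase_mul univ (fun j => X j + w) (mem_univ s), smul_eq_mul, mul_one]
  field_simp [hX s]

lemma deriv_div_prod_add_pos {ι : Type*} [Fintype ι] (X : ι → ℝ) {w : ℝ}
    (hX : ∀ s, 0 < X s + w) (hw : w * ∑ s, 1 / (X s + w) < 1) :
    0 < deriv (fun v => v / ∏ s, (X s + v)) w := by
  have hP : 0 < ∏ s, (X s + w) := prod_pos fun s _ => hX s
  rw [((hasDerivAt_id' w).fun_div (hasDerivAt_prod_add X fun s => (hX s).ne') hP.ne').deriv]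
  have hnum : 0 < 1 * ∏ s, (X s + w) - w * ((∏ s, (X s + w)) * ∑ s, 1 / (X s + w)) := by
    nlinarith
  positivity

theorem stmt15_general (n t : ℕ) (hnt : t < n)
    (X : Fin t → ℝ) (m w : ℝ)
    (hsum : ∀ s : Fin t, ((n : ℝ) - s) ≤ X s + w)
    (hwm : w ≤ Real.exp m) :
    w * ∑ s : Fin t, 1 / (X s + w) ≤ Real.exp m * Real.log ((n : ℝ) / (n - t)) ∧
    (Real.exp m * Real.log ((n : ℝ) / (n - t)) < 1 →
      0 < deriv (fun v : ℝ => v / ∏ s, (X s + v)) w) := by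
  have hpos (s : Fin t) : 0 < X s + w := by
    have hs : (s : ℕ) < n := s.2.trans hnt
    have hs' : (s : ℝ) < n := by exact_mod_cast hs
    linarith [hsum s]
  have hbound : w * ∑ s, 1 / (X s + w) ≤ exp m * log ((n : ℝ) / (n - t)) :=
    mul_le_mul hwm (sum_one_div_le_log_div hnt hsum)
      (sum_nonneg fun s _ => (one_div_pos.mpr (hpos s)).le) (exp_pos m).le
  exact ⟨hbound, fun hlt => deriv_div_prod_add_pos X hpos (hbound.trans_lt hlt)⟩

theorem stmt15 (n t : ℕ) (ht : 1 ≤ t) (hnt : t < n)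
    (X : Fin t → ℝ) (m w : ℝ)
    (hsum : ∀ s : Fin t, ((n : ℝ) - s) ≤ X s + w)
    (hw1 : 1 ≤ w) (hwm : w ≤ Real.exp m) :
    w * ∑ s : Fin t, 1 / (X s + w) ≤ Real.exp m * Real.log ((n : ℝ) / (n - t)) ∧
    (Real.exp m * Real.log ((n : ℝ) / (n - t)) < 1 →
      0 < deriv (fun v : ℝ => v / ∏ s, (X s + v)) w) :=
  stmt15_general n t hnt X m w hsum hwm
end

section
/- Suppose (a_i)_{i=1}^n are allocation functions on [0,1]^n that are symmetric (invariant under simultaneous permutation of users), satisfy Σ_i a_i(b) = k for all b (constant block size), are monotone non-decreasing in each own bid, and competitive (a_i is non-increasing in each other bid b_j, j ≠ i). If additionally a_1(b_1, 0, ..., 0) = k/n for all b_1 ∈ [0,1], then a_i(b) = k/n for all i and all b ∈ [0,1]^n. -/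
open Finset

theorem stmt18 (n k : ℕ) (hn : 0 < n) (hk : k ≤ n)
    (a : Fin n → (Fin n → ℝ) → ℝ)
    -- symmetry: invariance under simultaneous permutation of users
    (hsymm : ∀ (σ : Equiv.Perm (Fin n)) (b : Fin n → ℝ) (i : Fin n),
      a (σ i) (b ∘ σ.symm) = a i b)
    -- constant block size
    (hsize : ∀ b : Fin n → ℝ, (∀ j, b j ∈ Set.Icc (0:ℝ) 1) → ∑ i, a i b = k)
    -- monotone in own bid
    (hmono : ∀ (i : Fin n) (b : Fin n → ℝ), (∀ j, b j ∈ Set.Icc (0:ℝ) 1) →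
      ∀ x ∈ Set.Icc (0:ℝ) 1, ∀ y ∈ Set.Icc (0:ℝ) 1, x ≤ y →
        a i (Function.update b i x) ≤ a i (Function.update b i y))
    -- competitiveness: non-increasing in others' bids
    (hcomp : ∀ (i j : Fin n), j ≠ i → ∀ (b : Fin n → ℝ),
      (∀ l, b l ∈ Set.Icc (0:ℝ) 1) →
      ∀ x ∈ Set.Icc (0:ℝ) 1, ∀ y ∈ Set.Icc (0:ℝ) 1, x ≤ y →
        a i (Function.update b j y) ≤ a i (Function.update b j x))
    -- base case: allocation of user 0 is k/n when all other bids are zero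
    (hbase : ∀ b1 ∈ Set.Icc (0:ℝ) 1,
      a ⟨0, hn⟩ (Function.update (fun _ => (0:ℝ)) ⟨0, hn⟩ b1) = (k : ℝ) / n) :
    ∀ (i : Fin n) (b : Fin n → ℝ), (∀ j, b j ∈ Set.Icc (0:ℝ) 1) →
      a i b = (k : ℝ) / n := by
  -- Lemma A: if all coordinates other than j are zero, then a j b = k/n
  have hA : ∀ (j : Fin n) (b : Fin n → ℝ), (∀ l, b l ∈ Set.Icc (0:ℝ) 1) →
      (∀ l, l ≠ j → b l = 0) → a j b = (k:ℝ)/n := by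
    intro j b hb hz
    have key := hsymm (Equiv.swap ⟨0,hn⟩ j)
      (Function.update (fun _ => (0:ℝ)) ⟨0,hn⟩ (b j)) ⟨0,hn⟩
    rw [Equiv.swap_apply_left] at key
    have hc : (Function.update (fun _ => (0:ℝ)) ⟨0,hn⟩ (b j)) ∘
        ⇑(Equiv.swap (⟨0,hn⟩ : Fin n) j).symm = b := by
      funext x
      simp only [Equiv.symm_swap, Function.comp_apply]
      by_cases hx : x = j
      · subst hx
        rw [Equiv.swap_apply_right, Function.update_self]
      · by_cases hx0 : x = ⟨0,hn⟩
        · subst hx0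
          rw [Equiv.swap_apply_left]
          by_cases hj0 : j = (⟨0,hn⟩ : Fin n)
          · rw [hj0, Function.update_self]
          · rw [Function.update_of_ne hj0, hz _ hx]
        · rw [Equiv.swap_apply_of_ne_of_ne hx0 hx, Function.update_of_ne hx0,
            hz x hx]
    rw [hc] at key
    rw [key]
    exact hbase (b j) (hb j)
  -- main induction on the size of the support of b
  have main : ∀ (m : ℕ) (b : Fin n → ℝ), (∀ j, b j ∈ Set.Icc (0:ℝ) 1) →
      (Finset.filter (fun l => b l ≠ 0) Finset.univ).card ≤ m →
      ∀ i, a i b = (k:ℝ)/n := by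
    intro m
    induction m with
    | zero =>
      intro b hb hcard i
      have hz : ∀ l, l ≠ i → b l = 0 := by
        intro l _
        by_contra hbl
        have : l ∈ Finset.filter (fun l => b l ≠ 0) Finset.univ := by
          simp [hbl]
        have := Finset.card_pos.mpr ⟨l, this⟩
        omega
      exact hA i b hb hz
    | succ m ih =>
      intro b hb hcard
      -- every allocation is ≤ k/n
      have hle : ∀ i, a i b ≤ (k:ℝ)/n := by
        intro i
        by_cases hex : ∃ j, j ≠ i ∧ b j ≠ 0
        · obtain ⟨j, hji, hbj⟩ := hex
          set b' := Function.update b j 0 with hb'def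
          have hb' : ∀ l, b' l ∈ Set.Icc (0:ℝ) 1 := by
            intro l
            by_cases hl : l = j
            · subst hl; simp [hb'def, Set.mem_Icc]
            · rw [hb'def, Function.update_of_ne hl]; exact hb l
          have hcard' : (Finset.filter (fun l => b' l ≠ 0) Finset.univ).card ≤ m := by
            have hsub : Finset.filter (fun l => b' l ≠ 0) Finset.univ ⊆
                (Finset.filter (fun l => b l ≠ 0) Finset.univ).erase j := by
              intro x hx
              simp only [Finset.mem_filter, Finset.mem_univ, true_and] at hx
              by_cases hxj : x = j
              · subst hxj
                rw [hb'def, Function.update_self] at hx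
                exact absurd rfl hx
              · rw [hb'def, Function.update_of_ne hxj] at hx
                exact Finset.mem_erase.mpr ⟨hxj, by simp [hx]⟩
            have hjmem : j ∈ Finset.filter (fun l => b l ≠ 0) Finset.univ := by
              simp [hbj]
            have := Finset.card_le_card hsub
            rw [Finset.card_erase_of_mem hjmem] at this
            omega
          have hib' : a i b' = (k:ℝ)/n := ih b' hb' hcard' i
          have hcc := hcomp i j hji b' hb' 0 (by norm_num) (b j) (hb j) (hb j).1
          have e1 : Function.update b' j (b j) = b := by
            rw [hb'def, Function.update_idem, Function.update_eq_self]
          have e2 : Function.update b' j 0 = b' := by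
            rw [hb'def, Function.update_idem]
          rw [e1, e2, hib'] at hcc
          exact hcc
        · push_neg at hex
          have hz : ∀ l, l ≠ i → b l = 0 := fun l hl => hex l hl
          exact le_of_eq (hA i b hb hz)
      -- sum argument
      intro i
      have hsum := hsize b hb
      have htot : ∑ _i : Fin n, (k:ℝ)/n = k := by
        rw [Finset.sum_const, Finset.card_univ, Fintype.card_fin, nsmul_eq_mul]
        field_simp
      by_contra hne
      have hlt : a i b < (k:ℝ)/n := lt_of_le_of_ne (hle i) hne
      have : ∑ i, a i b < ∑ _i : Fin n, (k:ℝ)/n :=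
        Finset.sum_lt_sum (fun i _ => hle i) ⟨i, Finset.mem_univ i, hlt⟩
      rw [hsum, htot] at this
      exact lt_irrefl _ this
  intro i b hb
  exact main n b hb (le_trans (Finset.card_le_card (Finset.filter_subset _ _)) (by simp)) i
end
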